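/- arXiv:1410.2712 — 2 statements merged into one kernel-verified Lean document; each statement's English description precedes it below -/
import Mathlib

section
/- The postorder ordinal number of the dyadic interval I_{ℓ,k} in D_N is given by the explicit formula a^ℓ(k) = (k+1)(2^{N−ℓ+1} − 1) + Σ_{j=1}^{k} m(j), for 0 ≤ ℓ ≤ N and 0 ≤ k ≤ 2^ℓ − 1. -/
/-!
Count the predecessors of `I_{ℓ,k}` level by level. At a level `ℓ + i` below it, the intervals
inside or to the left of `I_{ℓ,k}` are exactly the first `(k + 1) 2^i`, and these sum to
`(k + 1)(2^{N-ℓ+1} - 1)`. At a coarser level `l < ℓ` only intervals strictly to the left count,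
`⌊k / 2^{ℓ-l}⌋` of them, and by Legendre's formula these sum to `v₂(k!) = ∑_{j ≤ k} m(j)`.
-/

open Finset

/-- The set of dyadic intervals in `[0,1]` of length `≥ 2^{-N}`, encoded as
pairs `(ℓ, k)` with `ℓ ≤ N` and `k < 2^ℓ`, representing `I_{ℓ,k} = [k/2^ℓ, (k+1)/2^ℓ)`. -/
def DN (N : ℕ) : Finset (ℕ × ℕ) :=
  (Finset.range (N + 1) ×ˢ Finset.range (2 ^ N)).filter fun p => p.2 < 2 ^ p.1

/-- `subInt q p` means the dyadic interval encoded by `q` is contained in the one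
encoded by `p`. -/
def subInt (q p : ℕ × ℕ) : Prop := p.1 ≤ q.1 ∧ q.2 / 2 ^ (q.1 - p.1) = p.2

instance (q p : ℕ × ℕ) : Decidable (subInt q p) :=
  inferInstanceAs (Decidable (_ ∧ _))

/-- Postorder on dyadic intervals: `q ⪯ p` iff `q ⊆ p`, or they are disjoint with
`q` to the left of `p`. -/
def postLE (q p : ℕ × ℕ) : Prop :=
  subInt q p ∨ (q.2 + 1) * 2 ^ p.1 ≤ p.2 * 2 ^ q.1

instance (q p : ℕ × ℕ) : Decidable (postLE q p) :=
  inferInstanceAs (Decidable (_ ∨ _))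

/-- Lexicographic order: first by level, then by position. -/
def lexLE (q p : ℕ × ℕ) : Prop := q.1 < p.1 ∨ (q.1 = p.1 ∧ q.2 ≤ p.2)

instance (q p : ℕ × ℕ) : Decidable (lexLE q p) :=
  inferInstanceAs (Decidable (_ ∨ _))

/-- Postorder ordinal number (starting at 1) of the interval `p` in `D_N`. -/
def postOrdinal (N : ℕ) (p : ℕ × ℕ) : ℕ :=
  ((DN N).filter fun q => postLE q p).card

/-- Lexicographic ordinal number (starting at 1) of the interval `p` in `D_N`. -/
def lexOrdinal (N : ℕ) (p : ℕ × ℕ) : ℕ :=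
  ((DN N).filter fun q => lexLE q p).card

lemma mem_DN {N : ℕ} {p : ℕ × ℕ} : p ∈ DN N ↔ p.1 ≤ N ∧ p.2 < 2 ^ p.1 := by
  rw [DN, mem_filter, mem_product, mem_range, mem_range, Nat.lt_succ_iff]
  exact ⟨fun ⟨⟨hN, _⟩, hp⟩ => ⟨hN, hp⟩,
    fun ⟨hN, hp⟩ => ⟨⟨hN, hp.trans_le (Nat.pow_le_pow_right two_pos hN)⟩, hp⟩⟩

lemma card_filter_DN (N : ℕ) (P : ℕ × ℕ → Prop) [DecidablePred P] :
    #{q ∈ DN N | P q} = ∑ l ∈ range (N + 1), #{k ∈ range (2 ^ l) | P (l, k)} := by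
  rw [card_eq_sum_card_fiberwise (f := Prod.fst) (t := range (N + 1))
    fun q hq => by rw [mem_coe, mem_filter, mem_DN] at hq; rw [mem_coe, mem_range]; omega]
  refine sum_congr rfl fun l hl => card_nbij' Prod.snd (Prod.mk l) ?_ ?_ ?_ ?_
  · rintro ⟨l', k⟩ hq
    simp only [mem_coe, mem_filter, mem_DN] at hq ⊢
    obtain ⟨⟨⟨_, hk⟩, hP⟩, rfl⟩ := hq
    simp [hk, hP]
  · intro k hk
    simp only [mem_coe, mem_filter, mem_DN, mem_range] at hk hl ⊢
    exact ⟨⟨⟨by omega, hk.1⟩, hk.2⟩, trivial⟩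
  · rintro ⟨l', k⟩ hq
    simp only [mem_coe, mem_filter] at hq
    simp [hq.2]
  · intro k _
    rfl

lemma card_filter_range_lt {m M : ℕ} (h : m ≤ M) : #{x ∈ range M | x < m} = m := by
  rw [show {x ∈ range M | x < m} = range m by ext x; simp; omega, card_range]

lemma postLE_iff_of_lt {ℓ k l k' : ℕ} (hl : l < ℓ) :
    postLE (l, k') (ℓ, k) ↔ k' < k / 2 ^ (ℓ - l) := by
  have hpow : 2 ^ ℓ = 2 ^ (ℓ - l) * 2 ^ l := by rw [← pow_add, Nat.sub_add_cancel hl.le]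
  have hsub : ¬ subInt (l, k') (ℓ, k) := fun h => absurd h.1 (not_le.2 hl)
  rw [postLE, or_iff_right hsub, Nat.lt_iff_add_one_le, Nat.le_div_iff_mul_le (by positivity)]
  simp only [hpow, ← mul_assoc]
  exact Nat.mul_le_mul_right_iff (by positivity)

lemma postLE_add_iff {ℓ k i k' : ℕ} :
    postLE (ℓ + i, k') (ℓ, k) ↔ k' < (k + 1) * 2 ^ i := by
  have hsub : subInt (ℓ + i, k') (ℓ, k) ↔ k * 2 ^ i ≤ k' ∧ k' < (k + 1) * 2 ^ i := by
    rw [subInt, Nat.add_sub_cancel_left, ← Nat.le_div_iff_mul_le (by positivity),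
      ← Nat.div_lt_iff_lt_mul (by positivity)]
    simp only [le_add_iff_nonneg_right, zero_le, true_and]
    omega
  have hleft : (k' + 1) * 2 ^ ℓ ≤ k * 2 ^ (ℓ + i) ↔ k' < k * 2 ^ i := by
    rw [pow_add, mul_left_comm, mul_comm (k' + 1), Nat.mul_le_mul_left_iff (by positivity)]
    omega
  rw [postLE, hsub, hleft, add_one_mul]
  generalize 2 ^ i = t at *
  omega

lemma card_postLE_level_of_lt {ℓ k l : ℕ} (hk : k < 2 ^ ℓ) (hl : l < ℓ) :
    #{k' ∈ range (2 ^ l) | postLE (l, k') (ℓ, k)} = k / 2 ^ (ℓ - l) := by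
  simp only [postLE_iff_of_lt hl]
  refine card_filter_range_lt (Nat.div_le_of_le_mul ?_)
  rw [← pow_add, Nat.sub_add_cancel hl.le]
  exact hk.le

lemma card_postLE_level_add {ℓ k : ℕ} (hk : k < 2 ^ ℓ) (i : ℕ) :
    #{k' ∈ range (2 ^ (ℓ + i)) | postLE (ℓ + i, k') (ℓ, k)} = (k + 1) * 2 ^ i := by
  simp only [postLE_add_iff]
  exact card_filter_range_lt (pow_add 2 ℓ i ▸ Nat.mul_le_mul_right _ hk)

lemma sum_Icc_padicValNat (p : ℕ) [Fact p.Prime] (k : ℕ) :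
    ∑ j ∈ Icc 1 k, padicValNat p j = padicValNat p k.factorial := by
  induction k with
  | zero => simp
  | succ k ih =>
    rw [sum_Icc_succ_top (by omega), ih, Nat.factorial_succ,
      padicValNat.mul (by omega) (Nat.factorial_ne_zero k), add_comm]

lemma sum_range_div_two_pow_sub_eq_sum_padicValNat {ℓ k : ℕ} (hk : k < 2 ^ ℓ) :
    ∑ l ∈ range ℓ, k / 2 ^ (ℓ - l) = ∑ j ∈ Icc 1 k, padicValNat 2 j := by
  rw [sum_Icc_padicValNat, padicValNat_factorial (b := ℓ + 1) ?_, ← sum_range_reflect,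
    sum_Ico_eq_sum_range, Nat.add_sub_cancel]
  · refine sum_congr rfl fun i hi => ?_
    rw [mem_range] at hi
    congr 2
    omega
  · rcases eq_or_ne k 0 with rfl | hk0
    · simp
    · exact Nat.lt_succ_of_lt (Nat.log_lt_of_lt_pow hk0 hk)

lemma sum_range_two_pow (n : ℕ) : ∑ i ∈ range n, 2 ^ i = 2 ^ n - 1 := by
  simpa using Nat.geomSum_eq le_rfl n

/-- Explicit formula for the postorder ordinal number:
`a^ℓ(k) = (k+1)(2^{N-ℓ+1} - 1) + Σ_{j=1}^k m(j)`, `m` being the 2-adic valuation. -/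
theorem postOrdinal_formula (N ℓ k : ℕ) (hℓ : ℓ ≤ N) (hk : k ≤ 2 ^ ℓ - 1) :
    postOrdinal N (ℓ, k)
      = (k + 1) * (2 ^ (N - ℓ + 1) - 1) + ∑ j ∈ Finset.Icc 1 k, padicValNat 2 j := by
  have hk_lt : k < 2 ^ ℓ := by have := Nat.one_le_two_pow (n := ℓ); omega
  obtain ⟨n, rfl⟩ : ∃ n, N = ℓ + n := ⟨N - ℓ, by omega⟩
  rw [postOrdinal, card_filter_DN, add_assoc, sum_range_add, Nat.add_sub_cancel_left,
    sum_congr rfl fun l hl => card_postLE_level_of_lt hk_lt (mem_range.1 hl),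
    sum_range_div_two_pow_sub_eq_sum_padicValNat hk_lt,
    sum_congr rfl fun i _ => card_postLE_level_add hk_lt i,
    ← mul_sum, sum_range_two_pow, add_comm]
end

section
/- For any nonempty collection C ⊆ D_N and any bijection τ: D_N → D_N, the function x = Σ_{I ∈ C} h_I satisfies ‖x‖_BMO = ⟦C⟧^{1/2} and ‖T_τ x‖_BMO = ⟦τ(C)⟧^{1/2}; hence the operator norm of T_τ on BMO_N is at least sup over nonempty C of (⟦τ(C)⟧/⟦C⟧)^{1/2}. -/
open Finset

/-- Length of the dyadic interval encoded by `p`: `2^{-ℓ}`. -/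
noncomputable def len (p : ℕ × ℕ) : ℝ := (2 : ℝ)⁻¹ ^ p.1

/-- Carleson constant of a finite collection of (encoded) dyadic intervals;
`sSup ∅ = 0` in `ℝ`, so the empty collection gets `0`. -/
noncomputable def carleson (C : Finset (ℕ × ℕ)) : ℝ :=
  sSup {v : ℝ | ∃ p ∈ C, v = (∑ q ∈ C.filter (fun q => subInt q p), len q) / len p}

/-- Squared `BMO_N` norm of a function `x = Σ_{I ∈ D_N} x_I h_I`, given by its
coefficient function: `‖x‖²_BMO = sup_{I ∈ D_N} (1/|I|) Σ_{J ⊆ I} |x_J|² |J|`. -/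
noncomputable def bmoSq (N : ℕ) (x : ℕ × ℕ → ℝ) : ℝ :=
  sSup {v : ℝ | ∃ p ∈ DN N,
    v = (∑ q ∈ (DN N).filter (fun q => subInt q p), (x q) ^ 2 * len q) / len p}

/-!
For `C ⊆ D_N`, the averages in `bmoSq` of the indicator of `C` are the Carleson averages of `C`,
except that they are taken over every `p ∈ D_N` rather than only over `p ∈ C`. The extra
intervals do not raise the supremum: for `p ∉ C` the sum `Σ_{q ∈ C, q ⊆ p} |q|` splits into the
same sums over the two halves of `p`, each of length `|p|/2`, so `Σ_{q ∈ C, q ⊆ p} |q| ≤ ⟦C⟧|p|`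
follows by induction upwards from the levels below those of `C`. The bound on `T_τ` is then its
defining inequality tested on the indicators of `C` and `τ(C)`.
-/

def leftChild (p : ℕ × ℕ) : ℕ × ℕ := (p.1 + 1, 2 * p.2)

def rightChild (p : ℕ × ℕ) : ℕ × ℕ := (p.1 + 1, 2 * p.2 + 1)

lemma len_pos (p : ℕ × ℕ) : 0 < len p := by
  unfold len; positivity

lemma len_leftChild (p : ℕ × ℕ) : len (leftChild p) = len p / 2 := by
  simp only [len, leftChild, pow_succ]; ring

lemma len_rightChild (p : ℕ × ℕ) : len (rightChild p) = len p / 2 := by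
  simp only [len, rightChild, pow_succ]; ring

lemma subInt_iff_eq_or_subInt_child {q p : ℕ × ℕ} :
    subInt q p ↔ q = p ∨ subInt q (leftChild p) ∨ subInt q (rightChild p) := by
  simp only [subInt, leftChild, rightChild]
  constructor
  · rintro ⟨hle, hdiv⟩
    rcases hle.eq_or_lt with heq | hlt
    · left
      rw [heq, Nat.sub_self, pow_zero, Nat.div_one] at hdiv
      exact Prod.ext heq.symm hdiv
    · right
      rw [show q.1 - p.1 = q.1 - (p.1 + 1) + 1 by omega, pow_succ,
        ← Nat.div_div_eq_div_mul] at hdiv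
      omega
  · rintro (rfl | ⟨hle, hdiv⟩ | ⟨hle, hdiv⟩)
    · exact ⟨le_rfl, by simp⟩
    all_goals
      refine ⟨by omega, ?_⟩
      rw [show q.1 - p.1 = q.1 - (p.1 + 1) + 1 by omega, pow_succ,
        ← Nat.div_div_eq_div_mul, hdiv]
      omega

lemma not_subInt_leftChild_of_subInt_rightChild {q p : ℕ × ℕ}
    (h : subInt q (rightChild p)) : ¬ subInt q (leftChild p) := by
  simp only [subInt, leftChild, rightChild] at h ⊢
  omega

lemma bddAbove_setOf_exists_mem_finset {α : Type*} (s : Finset α) (f : α → ℝ) :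
    BddAbove {v : ℝ | ∃ p ∈ s, v = f p} :=
  (s.finite_toSet.image f).bddAbove.mono <| by
    rintro _ ⟨p, hp, rfl⟩
    exact ⟨p, hp, rfl⟩

lemma carleson_nonneg (C : Finset (ℕ × ℕ)) : 0 ≤ carleson C :=
  Real.sSup_nonneg <| by
    rintro v ⟨p, -, rfl⟩
    exact div_nonneg (sum_nonneg fun q _ => (len_pos q).le) (len_pos p).le

lemma sum_len_subInt_le_carleson_mul_len_of_mem {C : Finset (ℕ × ℕ)} {p : ℕ × ℕ}
    (hp : p ∈ C) : ∑ q ∈ C.filter (subInt · p), len q ≤ carleson C * len p :=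
  (div_le_iff₀ (len_pos p)).mp <| le_csSup (bddAbove_setOf_exists_mem_finset _ _) ⟨p, hp, rfl⟩

lemma filter_subInt_eq_union_of_notMem {C : Finset (ℕ × ℕ)} {p : ℕ × ℕ} (hp : p ∉ C) :
    C.filter (subInt · p) =
      C.filter (subInt · (leftChild p)) ∪ C.filter (subInt · (rightChild p)) := by
  ext q
  simp only [mem_union, mem_filter, subInt_iff_eq_or_subInt_child (p := p)]
  constructor
  · rintro ⟨hq, rfl | hl | hr⟩
    exacts [absurd hq hp, .inl ⟨hq, hl⟩, .inr ⟨hq, hr⟩]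
  · rintro (⟨hq, hl⟩ | ⟨hq, hr⟩)
    exacts [⟨hq, .inr (.inl hl)⟩, ⟨hq, .inr (.inr hr)⟩]

theorem sum_len_subInt_le_carleson_mul_len (C : Finset (ℕ × ℕ)) (p : ℕ × ℕ) :
    ∑ q ∈ C.filter (subInt · p), len q ≤ carleson C * len p := by
  set L := C.sup Prod.fst
  suffices ∀ n : ℕ, ∀ p : ℕ × ℕ, L < p.1 + n →
      ∑ q ∈ C.filter (subInt · p), len q ≤ carleson C * len p from this (L + 1) p (by omega)
  intro n
  induction n with
  | zero =>
    intro p hp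
    have : C.filter (subInt · p) = ∅ :=
      filter_eq_empty_iff.mpr fun q hq hqp => by
        have hqL : q.1 ≤ L := le_sup (f := Prod.fst) hq
        have hpq : p.1 ≤ q.1 := hqp.1
        omega
    rw [this, sum_empty]
    exact mul_nonneg (carleson_nonneg C) (len_pos p).le
  | succ n ih =>
    intro p hp
    by_cases hpC : p ∈ C
    · exact sum_len_subInt_le_carleson_mul_len_of_mem hpC
    have hdisj :
        Disjoint (C.filter (subInt · (leftChild p))) (C.filter (subInt · (rightChild p))) :=
      disjoint_filter.mpr fun _ _ hl hr => not_subInt_leftChild_of_subInt_rightChild hr hl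
    calc ∑ q ∈ C.filter (subInt · p), len q
        = ∑ q ∈ C.filter (subInt · (leftChild p)), len q +
            ∑ q ∈ C.filter (subInt · (rightChild p)), len q := by
          rw [filter_subInt_eq_union_of_notMem hpC, sum_union hdisj]
      _ ≤ carleson C * len (leftChild p) + carleson C * len (rightChild p) :=
          add_le_add (ih _ (by simp only [leftChild]; omega))
            (ih _ (by simp only [rightChild]; omega))
      _ = carleson C * len p := by rw [len_leftChild, len_rightChild]; ring

lemma sum_indicator_sq_mul_len {N : ℕ} {C : Finset (ℕ × ℕ)} (hC : C ⊆ DN N) (p : ℕ × ℕ) :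
    ∑ q ∈ (DN N).filter (subInt · p), (if q ∈ C then (1 : ℝ) else 0) ^ 2 * len q =
      ∑ q ∈ C.filter (subInt · p), len q := by
  have hset : (DN N).filter (subInt · p) ∩ C = C.filter (subInt · p) := by
    ext q
    simp only [mem_inter, mem_filter]
    exact ⟨fun ⟨⟨_, h⟩, hq⟩ => ⟨hq, h⟩, fun ⟨hq, h⟩ => ⟨⟨hC hq, h⟩, hq⟩⟩
  rw [← hset, ← sum_ite_mem]
  refine sum_congr rfl fun q _ => ?_
  split_ifs <;> simp

lemma bmoSq_nonneg (N : ℕ) (x : ℕ × ℕ → ℝ) : 0 ≤ bmoSq N x :=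
  Real.sSup_nonneg <| by
    rintro v ⟨p, -, rfl⟩
    exact div_nonneg (sum_nonneg fun q _ => mul_nonneg (sq_nonneg _) (len_pos q).le) (len_pos p).le

theorem bmoSq_indicator {N : ℕ} {C : Finset (ℕ × ℕ)} (hC : C ⊆ DN N) :
    bmoSq N (fun p => if p ∈ C then 1 else 0) = carleson C := by
  refine le_antisymm (Real.sSup_le ?_ (carleson_nonneg C)) (Real.sSup_le ?_ (bmoSq_nonneg N _))
  · rintro v ⟨p, -, rfl⟩
    rw [sum_indicator_sq_mul_len hC, div_le_iff₀ (len_pos p)]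
    exact sum_len_subInt_le_carleson_mul_len C p
  · rintro v ⟨p, hp, rfl⟩
    refine le_csSup (bddAbove_setOf_exists_mem_finset _ _) ⟨p, hC hp, ?_⟩
    rw [sum_indicator_sq_mul_len hC]

lemma Set.InjOn.mem_finset_image_iff {α β : Type*} [DecidableEq β] {s : Set α} {τ : α → β}
    (hτ : Set.InjOn τ s) {C : Finset α} (hC : ↑C ⊆ s) {p : α} (hp : p ∈ s) :
    τ p ∈ C.image τ ↔ p ∈ C := by
  rw [← mem_coe, coe_image]
  exact hτ.mem_image_iff hC hp

theorem rearrangement_bmo_lower_general (N : ℕ) (τ : ℕ × ℕ → ℕ × ℕ)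
    (hbij : Set.BijOn τ (DN N) (DN N))
    (C : Finset (ℕ × ℕ)) (hC : C ⊆ DN N) :
    bmoSq N (fun p => if p ∈ C then 1 else 0) = carleson C ∧
    bmoSq N (fun p => if p ∈ C.image τ then 1 else 0) = carleson (C.image τ) ∧
    ∀ M : ℝ, 0 ≤ M →
      (∀ x y : ℕ × ℕ → ℝ, (∀ p ∈ DN N, y (τ p) = x p) →
        bmoSq N y ≤ M ^ 2 * bmoSq N x) →
      Real.sqrt (carleson (C.image τ) / carleson C) ≤ M := by
  have hτC : C.image τ ⊆ DN N := image_subset_iff.mpr fun c hc => hbij.mapsTo (hC hc)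
  refine ⟨bmoSq_indicator hC, bmoSq_indicator hτC, fun M hM hT => ?_⟩
  have hbound := hT (fun p => if p ∈ C then 1 else 0) (fun p => if p ∈ C.image τ then 1 else 0)
    fun p hp => by simp only [hbij.injOn.mem_finset_image_iff (coe_subset.mpr hC) hp]
  rw [bmoSq_indicator hC, bmoSq_indicator hτC] at hbound
  exact Real.sqrt_le_iff.mpr ⟨hM, div_le_of_le_mul₀ (carleson_nonneg C) (sq_nonneg M) hbound⟩

/-- For nonempty `C ⊆ D_N` and a bijection `τ` of `D_N`, the function
`x = Σ_{I ∈ C} h_I` satisfies `‖x‖²_BMO = ⟦C⟧` and `‖T_τ x‖²_BMO = ⟦τ(C)⟧`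
(here `T_τ x = Σ_{I ∈ C} h_{τ(I)}` has coefficients the indicator of `τ(C)`);
hence any bound `M` for the operator norm of `T_τ` on `BMO_N` satisfies
`(⟦τ(C)⟧/⟦C⟧)^{1/2} ≤ M`. -/
theorem rearrangement_bmo_lower (N : ℕ) (τ : ℕ × ℕ → ℕ × ℕ)
    (hbij : Set.BijOn τ (DN N) (DN N))
    (C : Finset (ℕ × ℕ)) (hC : C ⊆ DN N) (hne : C.Nonempty) :
    bmoSq N (fun p => if p ∈ C then 1 else 0) = carleson C ∧
    bmoSq N (fun p => if p ∈ C.image τ then 1 else 0) = carleson (C.image τ) ∧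
    ∀ M : ℝ, 0 ≤ M →
      (∀ x y : ℕ × ℕ → ℝ, (∀ p ∈ DN N, y (τ p) = x p) →
        bmoSq N y ≤ M ^ 2 * bmoSq N x) →
      Real.sqrt (carleson (C.image τ) / carleson C) ≤ M :=
  rearrangement_bmo_lower_general N τ hbij C hC
end
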